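/- Let L be a linear order. A lattice polynomial function p : L^n → L satisfies p(t ∨ t') = p(t) ∨ p(t') for all t, t' ∈ L^n (componentwise ∨) if and only if p(t) = ⋁_{i∈B} t_i for some nonempty subset B ⊆ [n]. -/

import Mathlib

/-- Lattice polynomial functions: the smallest class of functions `L^n → L` containing the
coordinate projections and closed under pointwise binary min and max. -/
inductive IsLatticePolynomial {L : Type*} [LinearOrder L] {n : ℕ} :
    ((Fin n → L) → L) → Prop
  | proj (k : Fin n) : IsLatticePolynomial (fun t => t k)
  | inf {p q : (Fin n → L) → L} : IsLatticePolynomial p → IsLatticePolynomial q →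
      IsLatticePolynomial (fun t => p t ⊓ q t)
  | sup {p q : (Fin n → L) → L} : IsLatticePolynomial p → IsLatticePolynomial q →
      IsLatticePolynomial (fun t => p t ⊔ q t)

/-!
A lattice polynomial commutes with every monotone self-map `g` of `L`, since `g` preserves
binary min and max. Fix `a < b` in `L`. A vector that is `m` except for a value `x ≥ m` at
`i` is the image under a monotone map of the vector `χᵢ` that is `a` except for `b` at `i`, so
`p` sends it to `x` or to `m` according as `b ≤ p χᵢ` or not. If `p` preserves `⊔`, it
preserves finite suprema, and writing `t` as the supremum of such vectors with `m = min t`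
gives `p t = ⋁_{i ∈ B} tᵢ` with `B = {i | b ≤ p χᵢ}`; applied to the constant vector `b` this
forces `B ≠ ∅`.
-/

open Finset Function

namespace Finset

variable {ι α : Type*} [SemilatticeSup α]

theorem eq_sup'_update_const [Fintype ι] [Nonempty ι] [DecidableEq ι] {t : ι → α} {m : α}
    (hm : ∀ j, m ≤ t j) :
    t = univ.sup' univ_nonempty fun i => update (fun _ => m) i (t i) := by
  funext j
  rw [Finset.sup'_apply]
  refine le_antisymm (le_sup'_of_le _ (mem_univ j) (by simp)) (sup'_le _ _ fun i _ => ?_)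
  rcases eq_or_ne j i with rfl | hji
  · simp
  · simpa [update_of_ne hji] using hm j

theorem sup'_ite_eq_sup'_filter {s : Finset ι} (hs : s.Nonempty) (P : ι → Prop)
    [DecidablePred P] (hP : (s.filter P).Nonempty) {t : ι → α} {m : α} (hm : ∀ j, m ≤ t j) :
    s.sup' hs (fun i => if P i then t i else m) = (s.filter P).sup' hP t := by
  obtain ⟨k, hk⟩ := hP
  refine le_antisymm (sup'_le _ _ fun i hi => ?_) (sup'_le _ _ fun i hi => ?_)
  · split_ifs with hPi
    · exact le_sup' t (mem_filter.2 ⟨hi, hPi⟩)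
    · exact (hm k).trans (le_sup' t hk)
  · obtain ⟨hi, hPi⟩ := mem_filter.1 hi
    exact le_sup'_of_le _ hi (by simp [hPi])

end Finset

namespace IsLatticePolynomial

variable {L : Type*} [LinearOrder L] {n : ℕ} {p : (Fin n → L) → L}

theorem nonempty_fin (hp : IsLatticePolynomial p) : Nonempty (Fin n) := by
  induction hp with
  | proj k => exact ⟨k⟩
  | inf _ _ ih _ => exact ih
  | sup _ _ ih _ => exact ih

theorem monotone (hp : IsLatticePolynomial p) : Monotone p := by
  induction hp with
  | proj k => exact fun t t' h => h k
  | inf _ _ ihp ihq => exact fun t t' h => inf_le_inf (ihp h) (ihq h)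
  | sup _ _ ihp ihq => exact fun t t' h => sup_le_sup (ihp h) (ihq h)

theorem apply_comp_of_monotone (hp : IsLatticePolynomial p) {g : L → L} (hg : Monotone g)
    (t : Fin n → L) : p (g ∘ t) = g (p t) := by
  induction hp with
  | proj k => rfl
  | inf _ _ ihp ihq => simp only [ihp, ihq, hg.map_min]
  | sup _ _ ihp ihq => simp only [ihp, ihq, hg.map_max]

theorem apply_const (hp : IsLatticePolynomial p) (c : L) : p (fun _ => c) = c :=
  hp.apply_comp_of_monotone (g := fun _ => c) monotone_const fun _ => c

theorem apply_update_const (hp : IsLatticePolynomial p) {a b m x : L} (hab : a < b)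
    (hmx : m ≤ x) (i : Fin n) :
    p (update (fun _ => m) i x) = if b ≤ p (update (fun _ => a) i b) then x else m := by
  set g : L → L := fun y => if b ≤ y then x else m
  have hg : Monotone g := fun y z hyz => by grind
  have hχ : g ∘ update (fun _ => a) i b = update (fun _ => m) i x := by
    rw [comp_update]
    simp [g, comp_def, not_le.2 hab]
  rw [← hχ, hp.apply_comp_of_monotone hg]

theorem apply_eq_sup'_ite (hp : IsLatticePolynomial p)
    (hsup : ∀ t t' : Fin n → L, p (fun i => t i ⊔ t' i) = p t ⊔ p t') {a b : L} (hab : a < b)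
    (t : Fin n → L) {m : L} (hm : ∀ j, m ≤ t j) :
    p t = univ.sup' (univ_nonempty_iff.2 hp.nonempty_fin)
      fun i => if b ≤ p (update (fun _ => a) i b) then t i else m := by
  have := hp.nonempty_fin
  classical
  conv_lhs => rw [eq_sup'_update_const hm, apply_sup'_eq_sup'_comp _ p fun t t' => hsup t t']
  exact sup'_congr _ rfl fun i _ => hp.apply_update_const hab (hm i) i

end IsLatticePolynomial

/-- A lattice polynomial function distributes over componentwise maximum iff it is a maximum
over a nonempty subset of its variables. -/
theorem latticePolynomial_max_homomorphism_iff {L : Type*} [LinearOrder L] {n : ℕ}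
    (p : (Fin n → L) → L) (hp : IsLatticePolynomial p) :
    (∀ t t' : Fin n → L, p (fun i => t i ⊔ t' i) = p t ⊔ p t') ↔
      ∃ (B : Finset (Fin n)) (hB : B.Nonempty), ∀ t : Fin n → L, p t = B.sup' hB t := by
  classical
  refine ⟨fun hsup => ?_, fun ⟨B, hB, hpB⟩ t t' => ?_⟩
  · have := hp.nonempty_fin
    rcases subsingleton_or_nontrivial L with hL | hL
    · exact ⟨univ, univ_nonempty, fun t => Subsingleton.elim _ _⟩
    obtain ⟨a, b, hab⟩ := exists_pair_lt L
    set B := univ.filter fun i => b ≤ p (update (fun _ => a) i b)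
    have hB : B.Nonempty := by
      by_contra hB
      have hχ : ∀ i, ¬b ≤ p (update (fun _ => a) i b) := fun i hi =>
        hB ⟨i, mem_filter.2 ⟨mem_univ i, hi⟩⟩
      have hb := hp.apply_eq_sup'_ite hsup hab (fun _ => b) fun _ => hab.le
      simp only [hp.apply_const, hχ, if_false, sup'_const] at hb
      exact hab.ne' hb
    refine ⟨B, hB, fun t => ?_⟩
    have hm : ∀ j, univ.inf' univ_nonempty t ≤ t j := fun j => inf'_le t (mem_univ j)
    rw [hp.apply_eq_sup'_ite hsup hab t hm, sup'_ite_eq_sup'_filter _ _ hB hm]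
  · simp only [hpB]
    exact eq_of_forall_ge_iff fun c => by simp [forall_and]
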